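/- arXiv:1011.4056 — 4 statements merged into one kernel-verified Lean document; each statement's English description precedes it below -/
import Mathlib

section
/- Let W be a non-negative random variable with Laplace transform φ(s) = E[e^{-sW}], and let n ≥ 0 be an integer. Then E[W^n] < ∞ if and only if there exist finite coefficients m_0, ..., m_n such that φ(s) = Σ_{r=0}^n (m_r/r!) s^r + o(s^n) as s ↓ 0. In this case m_r = E[(-W)^r] for each r ≤ n. -/
/-!
Put `R_j(x) = (-1)^j (e^{-x} - ∑_{k<j} (-x)^k/k!)` (`expNegRemainder j x`). Since
`R_{j+1}' = R_j` and `R_{j+1}(0) = 0`, induction gives `0 ≤ R_j(x) ≤ x^j/j!` on `[0, ∞)`; with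
`R_j = x^j/j! - R_{j+1}` this squeezes `R_j(sw)/s^j → w^j/j!` as `s ↓ 0`.
When the moments of order `< j` are finite, `φ(s) - ∑_{r<j} E[(-W)^r] s^r/r! = (-1)^j E[R_j(sW)]`.
If `E[W^j] < ∞`, dominated convergence (by `W^j/j!`) shows that this divided by `s^j` tends to
`E[(-W)^j]/j!`, which is the expansion. Conversely, an expansion of order `n` makes these
quotients converge for every `j ≤ n`; by induction on `j`, Fatou's lemma bounds `E[W^j]/j!` by the
limit, and uniqueness of limits identifies `m_j`.
-/

open MeasureTheory ProbabilityTheory Filter Asymptotics Finset Real Topology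
open scoped Nat

lemma nonneg_of_hasDerivAt_of_nonneg {g g' : ℝ → ℝ} (hg : ∀ x, HasDerivAt g (g' x) x)
    (h₀ : 0 ≤ g 0) (hg' : ∀ x, 0 ≤ x → 0 ≤ g' x) {x : ℝ} (hx : 0 ≤ x) : 0 ≤ g x := by
  have hmono : MonotoneOn g (Set.Ici 0) :=
    monotoneOn_of_hasDerivWithinAt_nonneg (convex_Ici 0)
      (fun y _ => (hg y).continuousAt.continuousWithinAt) (fun y _ => (hg y).hasDerivWithinAt)
      (fun y hy => hg' y (interior_subset hy))
  exact h₀.trans (hmono Set.self_mem_Ici hx hx)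

lemma hasDerivAt_pow_succ_div_factorial (j : ℕ) (x : ℝ) :
    HasDerivAt (fun x : ℝ => x ^ (j + 1) / (j + 1)!) (x ^ j / j !) x := by
  refine ((hasDerivAt_pow (j + 1) x).div_const ((j + 1)! : ℝ)).congr_deriv ?_
  rw [Nat.factorial_succ]
  push_cast
  field_simp

noncomputable def expNegRemainder (j : ℕ) (x : ℝ) : ℝ :=
  (-1) ^ j * (exp (-x) - ∑ k ∈ range j, (-x) ^ k / k !)

lemma expNegRemainder_zero (x : ℝ) : expNegRemainder 0 x = exp (-x) := by
  simp [expNegRemainder]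

lemma expNegRemainder_succ (j : ℕ) (x : ℝ) :
    expNegRemainder (j + 1) x = x ^ j / (j !) - expNegRemainder j x := by
  have hsq : ((-1 : ℝ) ^ j) * (-1) ^ j = 1 := by rw [← mul_pow]; simp
  simp only [expNegRemainder, sum_range_succ, neg_pow x, pow_succ]
  linear_combination (x ^ j / j !) * hsq

lemma expNegRemainder_succ_zero (j : ℕ) : expNegRemainder (j + 1) 0 = 0 := by
  induction j with
  | zero => simp [expNegRemainder_succ, expNegRemainder_zero]
  | succ j ih => rw [expNegRemainder_succ, ih]; simp

lemma continuous_expNegRemainder (j : ℕ) : Continuous (expNegRemainder j) := by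
  unfold expNegRemainder
  fun_prop

lemma hasDerivAt_expNegRemainder_succ (j : ℕ) (x : ℝ) :
    HasDerivAt (expNegRemainder (j + 1)) (expNegRemainder j x) x := by
  induction j generalizing x with
  | zero =>
    have hR : expNegRemainder 1 = fun x => 1 - exp (-x) := by
      funext y; simp [expNegRemainder_succ, expNegRemainder_zero]
    rw [hR, expNegRemainder_zero]
    simpa using ((hasDerivAt_neg x).exp).const_sub 1
  | succ j ih =>
    rw [funext (expNegRemainder_succ (j + 1)), expNegRemainder_succ]
    exact (hasDerivAt_pow_succ_div_factorial j x).sub (ih x)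

lemma expNegRemainder_nonneg_and_le (j : ℕ) {x : ℝ} (hx : 0 ≤ x) :
    0 ≤ expNegRemainder j x ∧ expNegRemainder j x ≤ x ^ j / j ! := by
  induction j generalizing x with
  | zero => simp [expNegRemainder_zero, (exp_pos (-x)).le, hx]
  | succ j ih =>
    constructor
    · exact nonneg_of_hasDerivAt_of_nonneg (hasDerivAt_expNegRemainder_succ j)
        (expNegRemainder_succ_zero j).ge (fun y hy => (ih hy).1) hx
    · rw [← sub_nonneg]
      exact nonneg_of_hasDerivAt_of_nonneg
        (fun y => (hasDerivAt_pow_succ_div_factorial j y).sub (hasDerivAt_expNegRemainder_succ j y))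
        (by simp [expNegRemainder_succ_zero]) (fun y hy => sub_nonneg.2 (ih hy).2) hx

lemma expNegRemainder_nonneg (j : ℕ) {x : ℝ} (hx : 0 ≤ x) : 0 ≤ expNegRemainder j x :=
  (expNegRemainder_nonneg_and_le j hx).1

lemma expNegRemainder_le (j : ℕ) {x : ℝ} (hx : 0 ≤ x) : expNegRemainder j x ≤ x ^ j / j ! :=
  (expNegRemainder_nonneg_and_le j hx).2

lemma sub_le_expNegRemainder (j : ℕ) {x : ℝ} (hx : 0 ≤ x) :
    x ^ j / (j !) - x ^ (j + 1) / (j + 1)! ≤ expNegRemainder j x := by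
  linarith [expNegRemainder_le (j + 1) hx, expNegRemainder_succ j x]

lemma expNegRemainder_mul_div_pow_le (j : ℕ) {s w : ℝ} (hs : 0 < s) (hw : 0 ≤ w) :
    expNegRemainder j (s * w) / s ^ j ≤ w ^ j / j ! := by
  rw [div_le_iff₀ (pow_pos hs j)]
  calc expNegRemainder j (s * w) ≤ (s * w) ^ j / j ! := expNegRemainder_le j (by positivity)
    _ = w ^ j / (j !) * s ^ j := by ring

lemma tendsto_expNegRemainder_mul_div_pow (j : ℕ) {w : ℝ} (hw : 0 ≤ w) :
    Tendsto (fun s => expNegRemainder j (s * w) / s ^ j) (𝓝[>] 0) (𝓝 (w ^ j / j !)) := by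
  have hlower : Tendsto (fun s : ℝ => w ^ j / (j !) - s * (w ^ (j + 1) / (j + 1)!)) (𝓝[>] 0)
      (𝓝 (w ^ j / j !)) := by
    have : Continuous fun s : ℝ => w ^ j / (j !) - s * (w ^ (j + 1) / (j + 1)!) := by fun_prop
    simpa using (this.tendsto 0).mono_left nhdsWithin_le_nhds
  refine tendsto_of_tendsto_of_tendsto_of_le_of_le' hlower tendsto_const_nhds ?_ ?_
  · filter_upwards [self_mem_nhdsWithin] with s (hs : 0 < s)
    rw [le_div_iff₀ (pow_pos hs j)]
    calc (w ^ j / (j !) - s * (w ^ (j + 1) / (j + 1)!)) * s ^ j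
        = (s * w) ^ j / (j !) - (s * w) ^ (j + 1) / (j + 1)! := by ring
      _ ≤ expNegRemainder j (s * w) := sub_le_expNegRemainder j (by positivity)
  · filter_upwards [self_mem_nhdsWithin] with s (hs : 0 < s)
    exact expNegRemainder_mul_div_pow_le j hs hw

lemma isLittleO_sub_sum_iff_tendsto {f : ℝ → ℝ} {c : ℕ → ℝ} {n : ℕ} :
    (fun s => f s - ∑ r ∈ range (n + 1), c r * s ^ r) =o[𝓝[>] 0] (fun s => s ^ n) ↔
      Tendsto (fun s => (f s - ∑ r ∈ range n, c r * s ^ r) / s ^ n) (𝓝[>] 0) (𝓝 (c n)) := by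
  have hpos : ∀ᶠ s : ℝ in 𝓝[>] 0, s ^ n ≠ 0 := by
    filter_upwards [self_mem_nhdsWithin] with s (hs : 0 < s) using pow_ne_zero n hs.ne'
  rw [isLittleO_iff_tendsto' (hpos.mono fun s hs h => absurd h hs),
    ← tendsto_sub_nhds_zero_iff (u := fun s => (f s - ∑ r ∈ range n, c r * s ^ r) / s ^ n)]
  refine tendsto_congr' (hpos.mono fun s hs => ?_)
  simp only [sum_range_succ]
  field_simp
  ring

lemma isLittleO_sub_sum_of_le {f : ℝ → ℝ} {c : ℕ → ℝ} {j N : ℕ} (hj : j ≤ N)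
    (h : (fun s => f s - ∑ r ∈ range (N + 1), c r * s ^ r) =o[𝓝[>] 0] (fun s => s ^ N)) :
    (fun s => f s - ∑ r ∈ range (j + 1), c r * s ^ r) =o[𝓝[>] 0] (fun s => s ^ j) := by
  have hpow : (fun s : ℝ => s ^ N) =O[𝓝[>] 0] fun s => s ^ j := by
    refine IsBigO.of_bound 1 ?_
    filter_upwards [Ioo_mem_nhdsGT (zero_lt_one' ℝ)] with s hs
    simp only [one_mul, norm_pow, Real.norm_of_nonneg hs.1.le]
    exact pow_le_pow_of_le_one hs.1.le hs.2.le hj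
  have htail : (fun s => ∑ r ∈ Ico (j + 1) (N + 1), c r * s ^ r) =o[𝓝[>] 0] fun s => s ^ j :=
    IsLittleO.fun_sum fun r hr => ((isLittleO_pow_pow (mem_Ico.1 hr).1).mono
      nhdsWithin_le_nhds).const_mul_left (c r)
  refine ((h.trans_isBigO hpow).add htail).congr_left fun s => ?_
  rw [← sum_range_add_sum_Ico _ (by omega : j + 1 ≤ N + 1)]
  ring

section Laplace

variable {Ω : Type*} [MeasurableSpace Ω] {μ : Measure Ω} {W : Ω → ℝ}

lemma integrable_pow_of_le [IsFiniteMeasure μ] (hW : ∀ ω, 0 ≤ W ω) (hWm : Measurable W)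
    {k n : ℕ} (hkn : k ≤ n) (h : Integrable (fun ω => W ω ^ n) μ) :
    Integrable (fun ω => W ω ^ k) μ := by
  refine ((integrable_const 1).add h).mono' (hWm.pow_const k).aestronglyMeasurable
    (Eventually.of_forall fun ω => ?_)
  rw [Real.norm_of_nonneg (pow_nonneg (hW ω) k)]
  change W ω ^ k ≤ 1 + W ω ^ n
  rcases le_total (W ω) 1 with h1 | h1
  · linarith [pow_le_one₀ (hW ω) h1 (n := k), pow_nonneg (hW ω) n]
  · linarith [pow_le_pow_right₀ h1 hkn]

lemma integrable_neg_pow {k : ℕ} (h : Integrable (fun ω => W ω ^ k) μ) :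
    Integrable (fun ω => (-W ω) ^ k) μ :=
  (h.const_mul ((-1) ^ k)).congr (ae_of_all _ fun ω => (neg_pow (W ω) k).symm)

lemma integrable_exp_neg_mul [IsFiniteMeasure μ] (hW : ∀ ω, 0 ≤ W ω) (hWm : Measurable W)
    {s : ℝ} (hs : 0 ≤ s) : Integrable (fun ω => exp (-s * W ω)) μ := by
  refine .of_bound (by fun_prop) 1 (Eventually.of_forall fun ω => ?_)
  rw [Real.norm_of_nonneg (exp_pos _).le, exp_le_one_iff, neg_mul, neg_nonpos]
  exact mul_nonneg hs (hW ω)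

lemma neg_mul_pow_div_factorial (s w : ℝ) (r : ℕ) :
    (-(s * w)) ^ r / r ! = s ^ r / r ! * (-w) ^ r := by
  rw [← mul_neg, mul_pow]
  ring

lemma integrable_expNegRemainder_mul [IsFiniteMeasure μ] (hW : ∀ ω, 0 ≤ W ω)
    (hWm : Measurable W) {j : ℕ} (hint : ∀ k < j, Integrable (fun ω => W ω ^ k) μ)
    {s : ℝ} (hs : 0 ≤ s) : Integrable (fun ω => expNegRemainder j (s * W ω)) μ := by
  refine (((integrable_exp_neg_mul hW hWm hs).sub (integrable_finsetSum (range j) fun r hr =>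
    (integrable_neg_pow (hint r (mem_range.1 hr))).const_mul (s ^ r / r !))).const_mul
    ((-1) ^ j)).congr (ae_of_all _ fun ω => ?_)
  simp only [expNegRemainder, Pi.sub_apply, neg_mul_pow_div_factorial, neg_mul]

lemma integral_expNegRemainder_mul [IsFiniteMeasure μ] (hW : ∀ ω, 0 ≤ W ω) (hWm : Measurable W)
    {j : ℕ} (hint : ∀ k < j, Integrable (fun ω => W ω ^ k) μ) {s : ℝ} (hs : 0 ≤ s) :
    ∫ ω, expNegRemainder j (s * W ω) ∂μ =
      (-1) ^ j *
        ((∫ ω, exp (-s * W ω) ∂μ) - ∑ r ∈ range j, (∫ ω, (-W ω) ^ r ∂μ) / r ! * s ^ r) := by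
  have hterm : ∀ r ∈ range j, Integrable (fun ω => s ^ r / r ! * (-W ω) ^ r) μ :=
    fun r hr => (integrable_neg_pow (hint r (mem_range.1 hr))).const_mul _
  simp only [expNegRemainder, neg_mul_pow_div_factorial]
  simp only [integral_const_mul, ← neg_mul]
  rw [integral_sub (integrable_exp_neg_mul hW hWm hs) (integrable_finsetSum _ hterm),
    integral_finsetSum _ hterm]
  simp only [integral_const_mul]
  congr 2
  exact sum_congr rfl fun r _ => by ring

lemma tendsto_integral_expNegRemainder_mul_div_pow (hW : ∀ ω, 0 ≤ W ω) (hWm : Measurable W)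
    {j : ℕ} (h : Integrable (fun ω => W ω ^ j) μ) :
    Tendsto (fun s => ∫ ω, expNegRemainder j (s * W ω) / s ^ j ∂μ) (𝓝[>] 0)
      (𝓝 (∫ ω, W ω ^ j / (j !) ∂μ)) := by
  refine tendsto_integral_filter_of_dominated_convergence (fun ω => W ω ^ j / (j !))
    (Eventually.of_forall fun s => ?_) ?_ (h.div_const _)
    (Eventually.of_forall fun ω => tendsto_expNegRemainder_mul_div_pow j (hW ω))
  · exact (((continuous_expNegRemainder j).measurable.comp (measurable_const.mul hWm)).div_const
      _).aestronglyMeasurable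
  · filter_upwards [self_mem_nhdsWithin] with s (hs : 0 < s)
    refine Eventually.of_forall fun ω => ?_
    rw [Real.norm_of_nonneg (div_nonneg (expNegRemainder_nonneg j (by positivity [hW ω]))
      (pow_nonneg hs.le j))]
    exact expNegRemainder_mul_div_pow_le j hs (hW ω)

lemma integrable_pow_of_tendsto_integral_expNegRemainder_mul_div_pow [IsFiniteMeasure μ]
    (hW : ∀ ω, 0 ≤ W ω) (hWm : Measurable W) {j : ℕ}
    (hint : ∀ k < j, Integrable (fun ω => W ω ^ k) μ) {L : ℝ}
    (hL : Tendsto (fun s => ∫ ω, expNegRemainder j (s * W ω) / s ^ j ∂μ) (𝓝[>] 0) (𝓝 L)) :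
    Integrable (fun ω => W ω ^ j) μ := by
  set g : ℝ → Ω → ℝ := fun s ω => expNegRemainder j (s * W ω) / s ^ j
  have hfatou : ∫⁻ ω, ENNReal.ofReal (W ω ^ j / (j !)) ∂μ ≤ ENNReal.ofReal L := calc
    _ = ∫⁻ ω, liminf (fun s => ENNReal.ofReal (g s ω)) (𝓝[>] 0) ∂μ :=
        lintegral_congr fun ω =>
          (ENNReal.tendsto_ofReal (tendsto_expNegRemainder_mul_div_pow j (hW ω))).liminf_eq.symm
    _ ≤ liminf (fun s => ∫⁻ ω, ENNReal.ofReal (g s ω) ∂μ) (𝓝[>] 0) :=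
        lintegral_liminf_le fun s => (((continuous_expNegRemainder j).measurable.comp
          (measurable_const.mul hWm)).div_const _).ennreal_ofReal
    _ = ENNReal.ofReal L := by
        refine Tendsto.liminf_eq ((ENNReal.tendsto_ofReal hL).congr' ?_)
        filter_upwards [self_mem_nhdsWithin] with s (hs : 0 < s)
        exact ofReal_integral_eq_lintegral_ofReal
          ((integrable_expNegRemainder_mul hW hWm hint hs.le).div_const _)
          (ae_of_all _ fun ω => div_nonneg (expNegRemainder_nonneg j (by positivity [hW ω]))
            (pow_nonneg hs.le j))
  have hdiv : Integrable (fun ω => W ω ^ j / (j !)) μ :=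
    (lintegral_ofReal_ne_top_iff_integrable
      ((hWm.pow_const j).div_const _).aestronglyMeasurable
      (ae_of_all _ fun ω => by positivity [hW ω])).1
      (ne_top_of_le_ne_top ENNReal.ofReal_ne_top hfatou)
  exact (hdiv.mul_const (j ! : ℝ)).congr (ae_of_all _ fun ω => div_mul_cancel₀ _ (by positivity))

theorem tendsto_laplace_sub_sum_div_pow [IsFiniteMeasure μ] (hW : ∀ ω, 0 ≤ W ω)
    (hWm : Measurable W) {j : ℕ} (h : Integrable (fun ω => W ω ^ j) μ) :
    Tendsto (fun s => ((∫ ω, exp (-s * W ω) ∂μ) -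
        ∑ r ∈ range j, (∫ ω, (-W ω) ^ r ∂μ) / r ! * s ^ r) / s ^ j) (𝓝[>] 0)
      (𝓝 ((∫ ω, (-W ω) ^ j ∂μ) / j !)) := by
  have hint : ∀ k < j, Integrable (fun ω => W ω ^ k) μ :=
    fun k hk => integrable_pow_of_le hW hWm hk.le h
  have hsq : ((-1 : ℝ) ^ j) * (-1) ^ j = 1 := by rw [← mul_pow]; norm_num
  have hmoment : (∫ ω, (-W ω) ^ j ∂μ) / j ! = (-1) ^ j * ∫ ω, W ω ^ j / (j !) ∂μ := by
    simp only [neg_pow (W _), integral_const_mul, integral_div]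
    ring
  rw [hmoment]
  refine ((tendsto_integral_expNegRemainder_mul_div_pow hW hWm h).const_mul ((-1) ^ j)).congr' ?_
  filter_upwards [self_mem_nhdsWithin] with s (hs : 0 < s)
  rw [integral_div, integral_expNegRemainder_mul hW hWm hint hs.le, mul_div_assoc, ← mul_assoc,
    hsq, one_mul]

theorem integrable_pow_of_tendsto_laplace_sub_sum_div_pow [IsFiniteMeasure μ]
    (hW : ∀ ω, 0 ≤ W ω) (hWm : Measurable W) {j : ℕ}
    (hint : ∀ k < j, Integrable (fun ω => W ω ^ k) μ) {L : ℝ}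
    (hL : Tendsto (fun s => ((∫ ω, exp (-s * W ω) ∂μ) -
        ∑ r ∈ range j, (∫ ω, (-W ω) ^ r ∂μ) / r ! * s ^ r) / s ^ j) (𝓝[>] 0) (𝓝 L)) :
    Integrable (fun ω => W ω ^ j) μ := by
  refine integrable_pow_of_tendsto_integral_expNegRemainder_mul_div_pow hW hWm hint
    ((hL.const_mul ((-1) ^ j)).congr' ?_)
  filter_upwards [self_mem_nhdsWithin] with s (hs : 0 < s)
  rw [integral_div, integral_expNegRemainder_mul hW hWm hint hs.le, mul_div_assoc]

theorem integrable_pow_and_eq_moment_of_isLittleO [IsFiniteMeasure μ] (hW : ∀ ω, 0 ≤ W ω)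
    (hWm : Measurable W) {n : ℕ} {m : ℕ → ℝ}
    (h : (fun s => (∫ ω, exp (-s * W ω) ∂μ) - ∑ r ∈ range (n + 1), m r / r ! * s ^ r)
      =o[𝓝[>] 0] (fun s => s ^ n)) :
    ∀ j ≤ n, Integrable (fun ω => W ω ^ j) μ ∧ m j = ∫ ω, (-W ω) ^ j ∂μ := by
  intro j
  induction j using Nat.strong_induction_on with
  | _ j ih =>
  intro hj
  have hint : ∀ k < j, Integrable (fun ω => W ω ^ k) μ := fun k hk => (ih k hk (hk.le.trans hj)).1
  have hlim := isLittleO_sub_sum_iff_tendsto.1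
    (isLittleO_sub_sum_of_le (c := fun r => m r / r !) hj h)
  have hcoeff : ∀ s : ℝ, ∑ r ∈ range j, m r / r ! * s ^ r =
      ∑ r ∈ range j, (∫ ω, (-W ω) ^ r ∂μ) / r ! * s ^ r := fun s =>
    sum_congr rfl fun r hr => by rw [(ih r (mem_range.1 hr) ((mem_range.1 hr).le.trans hj)).2]
  simp only [hcoeff] at hlim
  have hj_int := integrable_pow_of_tendsto_laplace_sub_sum_div_pow hW hWm hint hlim
  exact ⟨hj_int, (div_left_inj' (by positivity)).1
    (tendsto_nhds_unique hlim (tendsto_laplace_sub_sum_div_pow hW hWm hj_int))⟩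

end Laplace

/-- Moments of a nonnegative random variable via the Taylor expansion of its Laplace
transform at `0` (Lem. A in the paper): `E[W^n] < ∞` iff the Laplace transform
`φ(s) = E[e^{-sW}]` admits an `n`-th order expansion `∑_{r≤n} (m_r/r!) s^r + o(s^n)` as
`s ↓ 0`; and in that case `m_r = E[(-W)^r]` for every `r ≤ n`. -/
theorem laplace_moments_iff_expansion
    {Ω : Type*} [MeasureSpace Ω] [IsProbabilityMeasure (ℙ : Measure Ω)]
    (W : Ω → ℝ) (hW : ∀ ω, 0 ≤ W ω) (hWm : Measurable W) (n : ℕ) :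
    (Integrable (fun ω => W ω ^ n) ℙ ↔
      ∃ m : ℕ → ℝ,
        (fun s : ℝ => (∫ ω, Real.exp (-s * W ω) ∂ℙ)
            - ∑ r ∈ Finset.range (n + 1), m r / (Nat.factorial r) * s ^ r)
          =o[nhdsWithin (0 : ℝ) (Set.Ioi 0)] (fun s => s ^ n)) ∧
    (∀ m : ℕ → ℝ,
        (fun s : ℝ => (∫ ω, Real.exp (-s * W ω) ∂ℙ)
            - ∑ r ∈ Finset.range (n + 1), m r / (Nat.factorial r) * s ^ r)
          =o[nhdsWithin (0 : ℝ) (Set.Ioi 0)] (fun s => s ^ n) →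
        ∀ r ≤ n, m r = ∫ ω, (-W ω) ^ r ∂ℙ) := by
  refine ⟨⟨fun h => ⟨fun r => ∫ ω, (-W ω) ^ r, ?_⟩, fun ⟨m, hm⟩ => ?_⟩, fun m hm r hr => ?_⟩
  · exact isLittleO_sub_sum_iff_tendsto.2 (tendsto_laplace_sub_sum_div_pow hW hWm h)
  · exact (integrable_pow_and_eq_moment_of_isLittleO hW hWm hm n le_rfl).1
  · exact (integrable_pow_and_eq_moment_of_isLittleO hW hWm hm r hr).2
end

section
/- If z_1, ..., z_n are independent real random variables with E[z_i] = 0 and E[|z_i|^p] < ∞ for some p with 1 ≤ p ≤ 2, then E[|Σ_{i=1}^n z_i|^p] ≤ 2 Σ_{i=1}^n E[|z_i|^p]. -/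
/-!
For `1 ≤ p ≤ 2` the function `f t = |t| ^ p` satisfies `f (x + y) ≤ f x + f' x * y + 2 * f y`;
for `x ≥ 0` this comes from the tangent-line inequality of the convex function `t ↦ t ^ p`
combined with the subadditivity of `t ↦ t ^ (p - 1)`. Apply it with `x = z₁ + ⋯ + zₖ` and
`y = z_{k+1}`: by independence and `E z_{k+1} = 0` the middle term has expectation zero, so
`E f (S_{k+1}) ≤ E f (S_k) + 2 E f (z_{k+1})`, and induction on `k` gives the bound.
-/

open MeasureTheory ProbabilityTheory Finset

namespace Real

lemma rpow_add_mul_rpow_sub_one_mul_sub_le {p : ℝ} (hp : 1 ≤ p) {x y : ℝ} (hx : 0 ≤ x)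
    (hy : 0 ≤ y) : y ^ p + p * y ^ (p - 1) * (x - y) ≤ x ^ p := by
  rcases hy.eq_or_lt with rfl | hy
  · rcases hp.eq_or_lt with rfl | hp
    · simp
    · rw [zero_rpow (by linarith), zero_rpow (by linarith)]
      simpa using rpow_nonneg hx p
  · have hb := one_add_mul_self_le_rpow_one_add (s := x / y - 1)
      (by linarith [div_nonneg hx hy.le]) hp
    rw [add_sub_cancel, div_rpow hx hy.le] at hb
    have hyp : 0 < y ^ p := rpow_pos_of_pos hy p
    calc y ^ p + p * y ^ (p - 1) * (x - y) = (1 + p * (x / y - 1)) * y ^ p := by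
          rw [rpow_sub_one hy.ne']; field_simp
      _ ≤ x ^ p / y ^ p * y ^ p := by gcongr
      _ = x ^ p := div_mul_cancel₀ _ hyp.ne'

lemma abs_add_rpow_le_of_nonneg {p : ℝ} (hp1 : 1 ≤ p) (hp2 : p ≤ 2) {x : ℝ} (hx : 0 ≤ x)
    (y : ℝ) : |x + y| ^ p ≤ x ^ p + p * x ^ (p - 1) * y + 2 * |y| ^ p := by
  have hq0 : 0 ≤ p - 1 := by linarith
  have hq1 : p - 1 ≤ 1 := by linarith
  have rpow_sub_one_mul {t : ℝ} (ht : 0 ≤ t) : t ^ (p - 1) * t = t ^ p := by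
    rw [← rpow_add_one' ht (by linarith), sub_add_cancel]
  rcases le_or_gt 0 y with hy | hy
  · have tangent := rpow_add_mul_rpow_sub_one_mul_sub_le hp1 hx (add_nonneg hx hy)
    have subadd := rpow_add_le_add_rpow hx hy hq0 hq1
    rw [abs_of_nonneg (add_nonneg hx hy), abs_of_nonneg hy]
    nlinarith [mul_le_mul_of_nonneg_left subadd (mul_nonneg (by linarith : (0:ℝ) ≤ p) hy),
      rpow_sub_one_mul hy, mul_nonneg (by linarith : (0:ℝ) ≤ 2 - p) (rpow_nonneg hy p)]
  obtain ⟨c, rfl⟩ : ∃ c, y = -c := ⟨-y, (neg_neg y).symm⟩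
  have hc : 0 ≤ c := by linarith
  rw [abs_neg, abs_of_nonneg hc, ← sub_eq_add_neg]
  rcases le_or_gt c x with hcx | hxc
  · have tangent := rpow_add_mul_rpow_sub_one_mul_sub_le hp1 hx (sub_nonneg.2 hcx)
    have subadd := rpow_add_le_add_rpow (sub_nonneg.2 hcx) hc hq0 hq1
    rw [sub_add_cancel] at subadd
    rw [abs_of_nonneg (sub_nonneg.2 hcx)]
    nlinarith [mul_le_mul_of_nonneg_left subadd (mul_nonneg (by linarith : (0:ℝ) ≤ p) hc),
      rpow_sub_one_mul hc, mul_nonneg (by linarith : (0:ℝ) ≤ 2 - p) (rpow_nonneg hc p)]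
  · -- the tangent line of `t ↦ t ^ p` at `x` is Young's inequality `p x^(p-1) c ≤ (p-1) x^p + c^p`
    have tangent := rpow_add_mul_rpow_sub_one_mul_sub_le hp1 hc hx
    have hdiff : |x - c| ^ p ≤ c ^ p := by
      rw [abs_of_neg (by linarith)]
      exact rpow_le_rpow (by linarith) (by linarith) (by linarith)
    nlinarith [rpow_sub_one_mul hx, rpow_nonneg hx p]

/-- `(1 / p)` times the derivative of `t ↦ |t| ^ p`. -/
noncomputable def signedRpow (p x : ℝ) : ℝ :=
  if 0 ≤ x then x ^ (p - 1) else -(-x) ^ (p - 1)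

lemma measurable_signedRpow (p : ℝ) : Measurable (signedRpow p) :=
  Measurable.ite measurableSet_Ici (by fun_prop) (by fun_prop)

lemma abs_signedRpow (p x : ℝ) : |signedRpow p x| = |x| ^ (p - 1) := by
  unfold signedRpow
  split_ifs with hx
  · rw [abs_rpow_of_nonneg hx, abs_of_nonneg hx]
  · rw [abs_neg, abs_rpow_of_nonneg (by linarith), abs_neg]

lemma abs_add_rpow_le {p : ℝ} (hp1 : 1 ≤ p) (hp2 : p ≤ 2) (x y : ℝ) :
    |x + y| ^ p ≤ |x| ^ p + p * signedRpow p x * y + 2 * |y| ^ p := by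
  rcases le_or_gt 0 x with hx | hx
  · simpa only [signedRpow, if_pos hx, abs_of_nonneg hx] using
      abs_add_rpow_le_of_nonneg hp1 hp2 hx y
  · have h := abs_add_rpow_le_of_nonneg hp1 hp2 (neg_nonneg.2 hx.le) (-y)
    rw [← neg_add, abs_neg, abs_neg] at h
    rw [signedRpow, if_neg hx.not_ge, abs_of_neg hx]
    linarith

end Real

namespace ProbabilityTheory

variable {Ω : Type*} {mΩ : MeasurableSpace Ω} {μ : Measure Ω}

lemma integrable_abs_rpow_iff_memLp {X : Ω → ℝ} (hX : AEStronglyMeasurable X μ) {p : ℝ}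
    (hp : 0 < p) : Integrable (fun ω ↦ |X ω| ^ p) μ ↔ MemLp X (ENNReal.ofReal p) μ := by
  simpa [ENNReal.toReal_ofReal hp.le, hp] using
    integrable_norm_rpow_iff hX (p := ENNReal.ofReal p) (by simpa using hp) (by simp)

theorem integral_abs_add_rpow_le [IsFiniteMeasure μ] {p : ℝ} (hp1 : 1 ≤ p) (hp2 : p ≤ 2)
    {X Y : Ω → ℝ} (hX : MemLp X (ENNReal.ofReal p) μ) (hY : MemLp Y (ENNReal.ofReal p) μ)
    (hXY : IndepFun X Y μ) (hY0 : μ[Y] = 0) :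
    ∫ ω, |X ω + Y ω| ^ p ∂μ ≤ ∫ ω, |X ω| ^ p ∂μ + 2 * ∫ ω, |Y ω| ^ p ∂μ := by
  have hp0 : 0 < p := by linarith
  have hXp := (integrable_abs_rpow_iff_memLp hX.1 hp0).2 hX
  have hYp := (integrable_abs_rpow_iff_memLp hY.1 hp0).2 hY
  have hXYp := (integrable_abs_rpow_iff_memLp (hX.1.add hY.1) hp0).2 (hX.add hY)
  have hsX : Integrable (fun ω ↦ Real.signedRpow p (X ω)) μ := by
    have hXq : Integrable (fun ω ↦ ‖X ω‖ ^ (p - 1)) μ :=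
      integrable_norm_rpow_of_le hX.1 (by linarith) hp0.le (by linarith)
        (by simpa only [Real.norm_eq_abs] using hXp)
    refine hXq.mono' ?_ (ae_of_all _ fun ω ↦ by simp [Real.abs_signedRpow])
    exact ((Real.measurable_signedRpow p).comp_aemeasurable hX.1.aemeasurable).aestronglyMeasurable
  have hsXY : IndepFun (fun ω ↦ Real.signedRpow p (X ω)) Y μ :=
    hXY.comp (Real.measurable_signedRpow p) measurable_id
  have hYint : Integrable Y μ := hY.integrable (by simpa using hp1)
  have hcross : ∫ ω, Real.signedRpow p (X ω) * Y ω ∂μ = 0 := by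
    rw [← Pi.mul_def, hsXY.integral_mul_eq_mul_integral hsX.1 hY.1, hY0, mul_zero]
  have hprod : Integrable (fun ω ↦ p * (Real.signedRpow p (X ω) * Y ω)) μ :=
    (hsXY.integrable_mul hsX hYint).const_mul p
  calc ∫ ω, |X ω + Y ω| ^ p ∂μ
      ≤ ∫ ω, |X ω| ^ p + p * (Real.signedRpow p (X ω) * Y ω) + 2 * |Y ω| ^ p ∂μ :=
        integral_mono hXYp ((hXp.fun_add hprod).add (hYp.const_mul 2))
          fun ω ↦ by linarith [Real.abs_add_rpow_le hp1 hp2 (X ω) (Y ω)]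
    _ = ∫ ω, |X ω| ^ p ∂μ + 2 * ∫ ω, |Y ω| ^ p ∂μ := by
        rw [integral_add (hXp.fun_add hprod) (hYp.const_mul 2), integral_add hXp hprod,
          integral_const_mul, integral_const_mul, hcross, mul_zero, add_zero]

end ProbabilityTheory

/-- von Bahr–Esseen / Petrov inequality, case `1 ≤ p ≤ 2`:
for independent centered real random variables `z i` with finite `p`-th moments,
`E[|∑ z i|^p] ≤ 2 ∑ E[|z i|^p]`. -/
theorem vonBahr_esseen_moment_bound
    {Ω : Type*} [MeasureSpace Ω] [IsProbabilityMeasure (ℙ : Measure Ω)]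
    (n : ℕ) (z : Fin n → Ω → ℝ) (p : ℝ) (hp1 : 1 ≤ p) (hp2 : p ≤ 2)
    (hmeas : ∀ i, Measurable (z i))
    (hindep : iIndepFun z ℙ)
    (hcent : ∀ i, ∫ ω, z i ω ∂ℙ = 0)
    (hmom : ∀ i, Integrable (fun ω => |z i ω| ^ p) ℙ) :
    ∫ ω, |∑ i, z i ω| ^ p ∂ℙ ≤ 2 * ∑ i, ∫ ω, |z i ω| ^ p ∂ℙ := by
  classical
  have hLp i : MemLp (z i) (ENNReal.ofReal p) ℙ :=
    (integrable_abs_rpow_iff_memLp (hmeas i).aestronglyMeasurable (by linarith)).1 (hmom i)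
  suffices ∀ s : Finset (Fin n),
      ∫ ω, |∑ i ∈ s, z i ω| ^ p ∂ℙ ≤ 2 * ∑ i ∈ s, ∫ ω, |z i ω| ^ p ∂ℙ from this univ
  intro s
  induction s using Finset.induction_on with
  | empty => simp [Real.zero_rpow (by linarith : p ≠ 0)]
  | insert j s hj ih =>
    have step := integral_abs_add_rpow_le hp1 hp2 (memLp_finsetSum' s fun i _ ↦ hLp i) (hLp j)
      (hindep.indepFun_finsetSum_of_notMem hmeas hj) (hcent j)
    simp only [Finset.sum_apply] at step
    simp only [sum_insert hj, add_comm (z j _)]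
    linarith
end

section
/- Let (Ω, F, ν, S) be a measure-preserving system and A ∈ F with ν-a.s. finite return time n_A to A. Then the original system is ergodic if and only if the induced system (A, ν(·|A), S^{n_A}) is ergodic. -/
/-!
Let `E` be the first-entrance map to `A` (the identity on `A`) and `T` the induced map. Off `A`
the two agree, and at every point that returns to `A` we have `T = E ∘ S`. Hence
`ν (T⁻¹ B) = ν (S⁻¹ (E⁻¹ B)) = ν (E⁻¹ B)`, and since `E⁻¹ B` and `T⁻¹ B` coincide off `A` while
`E⁻¹ B ∩ A = B ∩ A`, cancelling the part off `A` shows that `T` preserves `ν(·|A)`. A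
`T`-invariant set `B` satisfies `E⁻¹ B = B`, so it is `S`-invariant up to a null set. Conversely,
an `S`-invariant set is `T`-invariant, and an `S`-invariant set meeting `A` in a null set is null,
because almost every orbit enters `A`.
-/

open MeasureTheory ProbabilityTheory

namespace Kakutani

open Set Function Filter

variable {Ω : Type*}

theorem measurable_sInf_setOf [MeasurableSpace Ω] {p : ℕ → Ω → Prop}
    (hp : ∀ n, MeasurableSet {ω | p n ω}) : Measurable fun ω => sInf {n | p n ω} := by
  refine measurable_of_Iic fun k => ?_
  have : (fun ω => sInf {n | p n ω}) ⁻¹' Iic k =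
      (⋃ j ≤ k, {ω | p j ω}) ∪ ⋂ j, {ω | p j ω}ᶜ := by
    ext ω
    rcases eq_empty_or_nonempty {n | p n ω} with h | h
    · simp_all [eq_empty_iff_forall_notMem]
    · refine ⟨fun hk => .inl (mem_biUnion hk (Nat.sInf_mem h)), ?_⟩
      rintro (hle | hnone)
      · obtain ⟨j, hj, hpj⟩ := mem_iUnion₂.mp hle
        exact (Nat.sInf_le hpj).trans hj
      · exact absurd (mem_iInter.mp hnone _) (not_not.mpr h.some_mem)
  rw [this]
  exact .union (.biUnion (to_countable _) fun j _ => hp j) (.iInter fun j => (hp j).compl)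

theorem measurable_iterate_apply [MeasurableSpace Ω] {S : Ω → Ω} (hS : Measurable S)
    {N : Ω → ℕ} (hN : Measurable N) : Measurable fun ω => S^[N ω] ω :=
  (measurable_from_prod_countable_left (f := fun p : Ω × ℕ => S^[p.2] p.1)
    fun n => hS.iterate n).comp (measurable_id.prodMk hN)

-- Both times are `0` (`sInf ∅ = 0`) at points whose forward orbit never meets `A`.
noncomputable def firstEntranceTime (S : Ω → Ω) (A : Set Ω) (ω : Ω) : ℕ :=
  sInf {n | S^[n] ω ∈ A}

noncomputable def firstReturnTime (S : Ω → Ω) (A : Set Ω) (ω : Ω) : ℕ :=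
  sInf {n | 1 ≤ n ∧ S^[n] ω ∈ A}

noncomputable def firstEntrance (S : Ω → Ω) (A : Set Ω) (ω : Ω) : Ω :=
  S^[firstEntranceTime S A ω] ω

noncomputable def inducedMap (S : Ω → Ω) (A : Set Ω) (ω : Ω) : Ω :=
  S^[firstReturnTime S A ω] ω

variable {S : Ω → Ω} {A : Set Ω}

theorem firstReturnTime_eq_firstEntranceTime_add_one {ω : Ω}
    (h : ∃ n, 1 ≤ n ∧ S^[n] ω ∈ A) :
    firstReturnTime S A ω = firstEntranceTime S A (S ω) + 1 := by
  have := Nat.sInf_add (p := fun n => 1 ≤ n ∧ S^[n] ω ∈ A) (n := 1) (Nat.sInf_mem h).1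
  simpa [firstReturnTime, firstEntranceTime, iterate_succ_apply] using this.symm

theorem firstEntrance_apply_eq_inducedMap {ω : Ω} (h : ∃ n, 1 ≤ n ∧ S^[n] ω ∈ A) :
    firstEntrance S A (S ω) = inducedMap S A ω := by
  rw [inducedMap, firstReturnTime_eq_firstEntranceTime_add_one h, iterate_succ_apply,
    firstEntrance]

open scoped Classical in
theorem firstEntrance_eq_piecewise : firstEntrance S A = A.piecewise id (inducedMap S A) := by
  ext ω
  by_cases hω : ω ∈ A
  · have : firstEntranceTime S A ω = 0 := Nat.sInf_eq_zero.mpr (.inl hω)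
    simp [firstEntrance, this, hω]
  · have : {n | S^[n] ω ∈ A} = {n | 1 ≤ n ∧ S^[n] ω ∈ A} := by
      ext (_ | n) <;> simp [hω]
    simp [firstEntrance, inducedMap, firstEntranceTime, firstReturnTime, this, hω]

open scoped Classical in
theorem preimage_firstEntrance_eq_self {B : Set Ω} (hB : inducedMap S A ⁻¹' B = B) :
    firstEntrance S A ⁻¹' B = B := by
  rw [firstEntrance_eq_piecewise, piecewise_preimage, hB, preimage_id, ite_same]

theorem preimage_inducedMap_eq_self {B : Set Ω} (hB : S ⁻¹' B = B) :
    inducedMap S A ⁻¹' B = B := by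
  ext ω
  exact Set.ext_iff.mp (IsFixedPt.preimage_iterate hB (firstReturnTime S A ω)) ω

variable [MeasurableSpace Ω]

theorem measurable_firstEntrance (hS : Measurable S) (hA : MeasurableSet A) :
    Measurable (firstEntrance S A) :=
  measurable_iterate_apply hS (measurable_sInf_setOf fun n => hS.iterate n hA)

theorem measurable_inducedMap (hS : Measurable S) (hA : MeasurableSet A) :
    Measurable (inducedMap S A) :=
  measurable_iterate_apply hS
    (measurable_sInf_setOf fun n => (MeasurableSet.const (1 ≤ n)).inter (hS.iterate n hA))

variable {μ : Measure Ω}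

theorem firstEntrance_comp_ae_eq_inducedMap (hret : ∀ᵐ ω ∂μ, ∃ n, 1 ≤ n ∧ S^[n] ω ∈ A) :
    firstEntrance S A ∘ S =ᵐ[μ] inducedMap S A :=
  hret.mono fun _ h => firstEntrance_apply_eq_inducedMap h

theorem measure_preimage_inducedMap_inter [IsFiniteMeasure μ] (hS : MeasurePreserving S μ μ)
    (hA : MeasurableSet A) (hret : ∀ᵐ ω ∂μ, ∃ n, 1 ≤ n ∧ S^[n] ω ∈ A) {B : Set Ω}
    (hB : MeasurableSet B) : μ (inducedMap S A ⁻¹' B ∩ A) = μ (B ∩ A) := by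
  have hE : MeasurableSet (firstEntrance S A ⁻¹' B) :=
    measurable_firstEntrance hS.measurable hA hB
  have hpre : μ (inducedMap S A ⁻¹' B) = μ (firstEntrance S A ⁻¹' B) := calc
    _ = μ (S ⁻¹' (firstEntrance S A ⁻¹' B)) :=
      measure_congr ((firstEntrance_comp_ae_eq_inducedMap hret).preimage B).symm
    _ = _ := hS.measure_preimage hE.nullMeasurableSet
  rw [← measure_inter_add_sdiff _ hA, ← measure_inter_add_sdiff (firstEntrance S A ⁻¹' B) hA,
    firstEntrance_eq_piecewise, piecewise_preimage, ite_inter_self, ite_sdiff_self,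
    preimage_id] at hpre
  exact (ENNReal.add_left_inj (measure_ne_top μ _)).mp hpre

theorem measurePreserving_inducedMap_cond [IsFiniteMeasure μ] (hS : MeasurePreserving S μ μ)
    (hA : MeasurableSet A) (hret : ∀ᵐ ω ∂μ, ∃ n, 1 ≤ n ∧ S^[n] ω ∈ A) :
    MeasurePreserving (inducedMap S A) (μ[|A]) (μ[|A]) := by
  have hT := measurable_inducedMap hS.measurable hA
  refine ⟨hT, Measure.ext fun B hB => ?_⟩
  rw [Measure.map_apply hT hB, cond_apply hA, cond_apply hA, inter_comm,
    measure_preimage_inducedMap_inter hS hA hret hB, inter_comm]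

theorem _root_.Ergodic.inducedMap_cond [IsFiniteMeasure μ] (h : Ergodic S μ)
    (hA : MeasurableSet A) (hret : ∀ᵐ ω ∂μ, ∃ n, 1 ≤ n ∧ S^[n] ω ∈ A) :
    Ergodic (inducedMap S A) (μ[|A]) where
  toMeasurePreserving := measurePreserving_inducedMap_cond h.toMeasurePreserving hA hret
  aeconst_set B hB hBinv := by
    have hSB : S ⁻¹' B =ᵐ[μ] B := by
      have := (firstEntrance_comp_ae_eq_inducedMap hret).preimage B
      rwa [preimage_comp, preimage_firstEntrance_eq_self hBinv, hBinv] at this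
    exact (h.quasiErgodic.aeconst_set₀ hB.nullMeasurableSet hSB).anti
      cond_absolutelyContinuous.ae_le

theorem measure_eq_zero_of_preimage_eq_of_inter (hS : Measure.QuasiMeasurePreserving S μ μ)
    (hvisit : ∀ᵐ ω ∂μ, ∃ n, S^[n] ω ∈ A) {C : Set Ω} (hC : S ⁻¹' C = C)
    (hAC : μ (A ∩ C) = 0) : μ C = 0 := by
  have hcover : C ≤ᵐ[μ] ⋃ n, S^[n] ⁻¹' (A ∩ C) := by
    filter_upwards [hvisit] with ω ⟨n, hn⟩ hω
    exact mem_iUnion.mpr ⟨n, hn, (Set.ext_iff.mp (IsFixedPt.preimage_iterate hC n) ω).mpr hω⟩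
  exact measure_mono_null_ae hcover
    (measure_iUnion_null fun n => (hS.iterate n).preimage_null hAC)

theorem _root_.Ergodic.of_inducedMap_cond (h : Ergodic (inducedMap S A) (μ[|A]))
    (hS : MeasurePreserving S μ μ) (hA : MeasurableSet A) (hAfin : μ A ≠ ⊤)
    (hret : ∀ᵐ ω ∂μ, ∃ n, 1 ≤ n ∧ S^[n] ω ∈ A) : Ergodic S μ := by
  have hnull {C : Set Ω} (hC : S ⁻¹' C = C) (h0 : μ[|A] C = 0) : μ C = 0 := by
    refine measure_eq_zero_of_preimage_eq_of_inter hS.quasiMeasurePreserving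
      (hret.mono fun _ ⟨n, _, hn⟩ => ⟨n, hn⟩) hC ?_
    simpa [cond_apply hA, hAfin] using h0
  refine ⟨hS, ⟨fun B hB hBinv => eventuallyConst_set'.mpr ?_⟩⟩
  rcases h.measure_self_or_compl_eq_zero hB (preimage_inducedMap_eq_self hBinv) with h0 | h0
  · exact .inl (ae_eq_empty.mpr (hnull hBinv h0))
  · exact .inr (ae_eq_univ.mpr (hnull (by rw [preimage_compl, hBinv]) h0))

end Kakutani

open Kakutani

theorem ergodic_iff_induced_ergodic_general
    {Ω : Type*} [MeasurableSpace Ω] (ν : Measure Ω) [IsProbabilityMeasure ν]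
    (S : Ω → Ω) (hS : MeasurePreserving S ν ν)
    (A : Set Ω) (hA : MeasurableSet A)
    (hret : ∀ᵐ ω ∂ν, ∃ n : ℕ, 1 ≤ n ∧ S^[n] ω ∈ A)
    (nA : Ω → ℕ) (hnA : ∀ ω, nA ω = sInf {n : ℕ | 1 ≤ n ∧ S^[n] ω ∈ A})
    (T : Ω → Ω) (hT : ∀ ω, T ω = S^[nA ω] ω) :
    Ergodic S ν ↔ Ergodic T (ν[|A]) := by
  obtain rfl : nA = firstReturnTime S A := funext hnA
  obtain rfl : T = inducedMap S A := funext hT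
  exact ⟨fun h => h.inducedMap_cond hA hret,
    fun h => h.of_inducedMap_cond hS hA (measure_ne_top ν A) hret⟩

/-- Kakutani tower equivalence: for a probability-preserving system `(Ω, ν, S)` and a set
`A` of positive measure with ν-a.s. finite first return time `n_A`, the system is ergodic
if and only if the induced system `(A, ν(·|A), S^{n_A})` is ergodic. -/
theorem ergodic_iff_induced_ergodic
    {Ω : Type*} [MeasurableSpace Ω] (ν : Measure Ω) [IsProbabilityMeasure ν]
    (S : Ω → Ω) (hS : MeasurePreserving S ν ν)
    (A : Set Ω) (hA : MeasurableSet A) (hApos : 0 < ν A)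
    (hret : ∀ᵐ ω ∂ν, ∃ n : ℕ, 1 ≤ n ∧ S^[n] ω ∈ A)
    (nA : Ω → ℕ) (hnA : ∀ ω, nA ω = sInf {n : ℕ | 1 ≤ n ∧ S^[n] ω ∈ A})
    (T : Ω → Ω) (hT : ∀ ω, T ω = S^[nA ω] ω) :
    Ergodic S ν ↔ Ergodic T (ν[|A]) :=
  ergodic_iff_induced_ergodic_general ν S hS A hA hret nA hnA T hT
end

section
/- Let F : [0,1]^Q → [0,1]^Q be the generating function of a multi-type Galton–Watson process over a finite type set Q, i.e., F^a(s⃗) = E_{q^a}[∏_b s_b^{x_b}]. If for some n₀, min_a P_{MGW^a}(|Z_{n₀}| > 1) > 0 and min_a P_{MGW^a}(|Z_{n₀}| = 0) = 0, then for any s₀ < 1 there exist C < ∞ and γ < 1 with ‖F^{(n)}(s⃗)‖_∞ ≤ C γ^n ‖s⃗‖_∞ for all s⃗ ∈ [0, s₀]^Q and all n ≥ 0, where F^{(n)} is the n-fold composition. -/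
/-!
If every type a.s. has a descendant at generation `n₀` and with positive probability more than
one, then `∏_b t_b ^ Z_{n₀,b} ≤ m` a.s. and `≤ m²` on an event of probability `≥ p > 0` whenever
`0 ≤ t ≤ m ≤ 1`, so a block of `n₀` generations multiplies the sup norm by at most
`1 - (1 - s₀) p < 1` on `[0, s₀]^Q`. The remaining `n mod n₀` generations do not increase the
sup norm below `1`, because there is no extinction before generation `n₀` either: `x = F^{(r)}(0)`
is a fixed point of `F^{(n₀)}` with `‖x‖_∞ < 1`, and the block estimate forces `x = 0`.
-/

open MeasureTheory Finset

theorem Finset.prod_pow_le_pow_sum {ι R : Type*} [CommSemiring R] [PartialOrder R]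
    [IsOrderedRing R] (s : Finset ι) (k : ι → ℕ) {t : ι → R} {m : R}
    (ht0 : ∀ i ∈ s, 0 ≤ t i) (htm : ∀ i ∈ s, t i ≤ m) :
    ∏ i ∈ s, t i ^ k i ≤ m ^ ∑ i ∈ s, k i := by
  rw [← prod_pow_eq_pow_sum]
  exact prod_le_prod (fun i hi => pow_nonneg (ht0 i hi) _)
    fun i hi => pow_le_pow_left₀ (ht0 i hi) (htm i hi) _

theorem integral_le_sub_mul_measureReal {Ω : Type*} [MeasurableSpace Ω] {ν : Measure Ω}
    [IsProbabilityMeasure ν] {g : Ω → ℝ} {c ε : ℝ} {S : Set Ω}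
    (hgc : ∀ᵐ ω ∂ν, g ω ≤ c) (hS : ∀ ω ∈ S, g ω ≤ c - ε) (hε : 0 ≤ ε) (hεc : ε ≤ c) :
    ∫ ω, g ω ∂ν ≤ c - ε * ν.real S := by
  have hS1 : ν.real S ≤ 1 := measureReal_le_one
  by_cases hg : Integrable g ν
  swap
  · rw [integral_undef hg]
    nlinarith [measureReal_nonneg (μ := ν) (s := S)]
  have hmarkov := mul_meas_ge_le_integral_of_nonneg (hgc.mono fun ω h => sub_nonneg.2 h)
    ((integrable_const c).sub hg) ε
  have hsub : ν.real S ≤ ν.real {ω | ε ≤ c - g ω} :=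
    measureReal_mono fun ω hω => show ε ≤ c - g ω by linarith [hS ω hω]
  rw [integral_sub (integrable_const c) hg, integral_const, probReal_univ, one_smul] at hmarkov
  nlinarith

theorem pow_div_le_inv_mul_rpow_pow {β : ℝ} (hβ0 : 0 < β) (hβ1 : β ≤ 1) {n₀ : ℕ} (hn₀ : 0 < n₀)
    (n : ℕ) : β ^ (n / n₀) ≤ β⁻¹ * (β ^ (n₀ : ℝ)⁻¹) ^ n := by
  rw [le_inv_mul_iff₀ hβ0, ← pow_succ', ← Real.rpow_natCast, ← Real.rpow_natCast,
    ← Real.rpow_mul hβ0.le]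
  apply Real.rpow_le_rpow_of_exponent_ge hβ0 hβ1
  rw [inv_mul_le_iff₀ (by exact_mod_cast hn₀)]
  exact_mod_cast (Nat.lt_mul_div_succ n hn₀).le

theorem iterate_le_pow_mul {X : Type*} {G : (X → ℝ) → X → ℝ} {β c : ℝ} (hβ0 : 0 ≤ β)
    (hβ1 : β ≤ 1)
    (hG : ∀ t m, (∀ x, 0 ≤ t x) → (∀ x, t x ≤ m) → m ≤ c → ∀ x, 0 ≤ G t x ∧ G t x ≤ β * m)
    (k : ℕ) {t : X → ℝ} {m : ℝ} (ht0 : ∀ x, 0 ≤ t x) (htm : ∀ x, t x ≤ m) (hm0 : 0 ≤ m)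
    (hmc : m ≤ c) : ∀ x, 0 ≤ G^[k] t x ∧ G^[k] t x ≤ β ^ k * m := by
  induction k with
  | zero => simpa using fun x => ⟨ht0 x, htm x⟩
  | succ k ih =>
    have hβk : β ^ k * m ≤ m := mul_le_of_le_one_left hm0 (pow_le_one₀ hβ0 hβ1)
    intro x
    rw [Function.iterate_succ_apply', pow_succ', mul_assoc]
    exact hG _ _ (fun y => (ih y).1) (fun y => (ih y).2) (hβk.trans hmc) x

def IsGeneratingFunction {Ω Q : Type*} [MeasurableSpace Ω] [Fintype Q] (μ : Q → Measure Ω)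
    (Z : ℕ → Ω → Q → ℕ) (F : (Q → ℝ) → Q → ℝ) : Prop :=
  ∀ a n s, F^[n] s a = ∫ ω, ∏ b, s b ^ Z n ω b ∂μ a

namespace IsGeneratingFunction

variable {Ω Q : Type*} [MeasurableSpace Ω] [Fintype Q] {μ : Q → Measure Ω}
  {Z : ℕ → Ω → Q → ℕ} {F : (Q → ℝ) → Q → ℝ} {n : ℕ} {a : Q} {t : Q → ℝ} {m : ℝ}

theorem iterate_nonneg (hF : IsGeneratingFunction μ Z F) (ht0 : ∀ b, 0 ≤ t b) (n : ℕ) (a : Q) :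
    0 ≤ F^[n] t a := by
  rw [hF]
  exact integral_nonneg fun ω => prod_nonneg fun b _ => pow_nonneg (ht0 b) _

theorem iterate_le_mul_one_sub (hF : IsGeneratingFunction μ Z F) [IsProbabilityMeasure (μ a)]
    (hsurv : μ a {ω | ∑ b, Z n ω b = 0} = 0) (ht0 : ∀ b, 0 ≤ t b) (htm : ∀ b, t b ≤ m)
    (hm0 : 0 ≤ m) (hm1 : m ≤ 1) :
    F^[n] t a ≤ m * (1 - (1 - m) * (μ a).real {ω | 1 < ∑ b, Z n ω b}) := by
  have hsurv' : ∀ᵐ ω ∂μ a, ∑ b, Z n ω b ≠ 0 := ae_iff.2 (by simpa using hsurv)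
  have hprod ω : ∏ b, t b ^ Z n ω b ≤ m ^ ∑ b, Z n ω b :=
    prod_pow_le_pow_sum _ _ (fun b _ => ht0 b) fun b _ => htm b
  have hle : ∀ᵐ ω ∂μ a, ∏ b, t b ^ Z n ω b ≤ m := hsurv'.mono fun ω hω =>
    (hprod ω).trans (pow_le_of_le_one hm0 hm1 hω)
  have hle_sq : ∀ ω ∈ {ω | 1 < ∑ b, Z n ω b}, ∏ b, t b ^ Z n ω b ≤ m - (m - m * m) := by
    intro ω hω
    have := (hprod ω).trans (pow_le_pow_of_le_one hm0 hm1 (Nat.succ_le_of_lt hω))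
    linarith [sq m]
  rw [hF]
  calc _ ≤ m - (m - m * m) * (μ a).real {ω | 1 < ∑ b, Z n ω b} :=
        integral_le_sub_mul_measureReal hle hle_sq (by nlinarith) (by nlinarith)
    _ = _ := by ring

theorem iterate_le_mul_of_le (hF : IsGeneratingFunction μ Z F) [IsProbabilityMeasure (μ a)]
    (hsurv : μ a {ω | ∑ b, Z n ω b = 0} = 0) {p s₀ β : ℝ}
    (hp : p ≤ (μ a).real {ω | 1 < ∑ b, Z n ω b}) (hp0 : 0 ≤ p) (hs₀ : s₀ ≤ 1)
    (hβ : 1 - (1 - s₀) * p ≤ β) (ht0 : ∀ b, 0 ≤ t b) (htm : ∀ b, t b ≤ m) (hms₀ : m ≤ s₀) :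
    F^[n] t a ≤ β * m := by
  have hm0 : 0 ≤ m := (ht0 a).trans (htm a)
  have hp' : (1 - s₀) * p ≤ (1 - m) * (μ a).real {ω | 1 < ∑ b, Z n ω b} :=
    mul_le_mul (by linarith) hp hp0 (by linarith)
  have := hF.iterate_le_mul_one_sub hsurv ht0 htm hm0 (hms₀.trans hs₀)
  nlinarith

theorem pos_of_branching (hF : IsGeneratingFunction μ Z F) [IsProbabilityMeasure (μ a)]
    (hsurv : μ a {ω | ∑ b, Z n ω b = 0} = 0) (hbig : 0 < μ a {ω | 1 < ∑ b, Z n ω b}) :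
    0 < n := by
  refine Nat.pos_of_ne_zero fun hn => ?_
  subst hn
  have := hF.iterate_le_mul_one_sub (t := fun _ => 1 / 2) (m := 1 / 2) hsurv
    (fun _ => by norm_num) (fun _ => le_rfl) (by norm_num) (by norm_num)
  have hp : 0 < (μ a).real {ω | 1 < ∑ b, Z 0 ω b} :=
    ENNReal.toReal_pos hbig.ne' (measure_ne_top _ _)
  rw [Function.iterate_zero_apply] at this
  linarith

theorem iterate_zero_lt_one (hF : IsGeneratingFunction μ Z F) [IsProbabilityMeasure (μ a)]
    (hn : F^[n] 0 a = 0) {r : ℕ} (hrn : r ≤ n) : F^[r] 0 a < 1 := by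
  have hpos : 0 < (μ a).real {ω | ∑ b, Z r ω b ≠ 0} := by
    refine ENNReal.toReal_pos (fun hnull => ?_) (measure_ne_top _ _)
    have hext : ∀ᵐ ω ∂μ a, ∑ b, Z r ω b = 0 := ae_iff.2 (by simpa using hnull)
    have hone (y : Q → ℝ) : F^[r] y a = 1 := by
      rw [hF, integral_congr_ae (g := fun _ => 1), integral_const, probReal_univ, one_smul]
      filter_upwards [hext] with ω hω
      exact prod_eq_one fun b hb => by rw [sum_eq_zero_iff.1 hω b hb, pow_zero]
    rw [← Nat.add_sub_of_le hrn, Function.iterate_add_apply, hone] at hn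
    exact one_ne_zero hn
  have hle : ∀ᵐ ω ∂μ a, ∏ b, (0 : Q → ℝ) b ^ Z r ω b ≤ 1 := .of_forall fun ω =>
    prod_le_one (fun b _ => pow_nonneg le_rfl _) fun b _ => pow_le_one₀ le_rfl zero_le_one
  have hvanish : ∀ ω ∈ {ω | ∑ b, Z r ω b ≠ 0}, ∏ b, (0 : Q → ℝ) b ^ Z r ω b ≤ 1 - 1 := by
    intro ω hω
    simp only [Pi.zero_apply, prod_pow_eq_pow_sum]
    rw [zero_pow hω, sub_self]
  rw [hF]
  linarith [integral_le_sub_mul_measureReal hle hvanish zero_le_one le_rfl]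

theorem iterate_zero_eq_zero_of_le (hF : IsGeneratingFunction μ Z F)
    [∀ a, IsProbabilityMeasure (μ a)] (hsurv : ∀ a, μ a {ω | ∑ b, Z n ω b = 0} = 0)
    (hbig : ∀ a, 0 < μ a {ω | 1 < ∑ b, Z n ω b}) {r : ℕ} (hrn : r ≤ n) : F^[r] 0 = 0 := by
  have hn : F^[n] 0 = 0 := by
    ext a
    have := hF.iterate_le_mul_one_sub (t := 0) (m := 0) (hsurv a) (fun _ => le_rfl)
      (fun _ => le_rfl) le_rfl zero_le_one
    exact le_antisymm (by simpa using this) (hF.iterate_nonneg (fun _ => le_rfl) n a)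
  set x := F^[r] 0
  have hfix : F^[n] x = x := by
    rw [← Function.iterate_add_apply, add_comm, Function.iterate_add_apply, hn]
  ext a
  have : Nonempty Q := ⟨a⟩
  obtain ⟨a₀, ha₀⟩ := Finite.exists_max x
  have hx0 b : 0 ≤ x b := hF.iterate_nonneg (fun _ => le_rfl) r b
  have hlt : x a₀ < 1 := hF.iterate_zero_lt_one (congrFun hn a₀) hrn
  have hp : 0 < (μ a₀).real {ω | 1 < ∑ b, Z n ω b} :=
    ENNReal.toReal_pos (hbig a₀).ne' (measure_ne_top _ _)
  have hcontr := hF.iterate_le_mul_one_sub (hsurv a₀) hx0 ha₀ (hx0 a₀) hlt.le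
  rw [hfix] at hcontr
  have hmax : x a₀ ≤ 0 := by nlinarith [mul_pos (sub_pos.2 hlt) hp]
  exact le_antisymm ((ha₀ a).trans hmax) (hx0 a)

theorem iterate_le_of_iterate_zero_eq_zero (hF : IsGeneratingFunction μ Z F)
    [IsProbabilityMeasure (μ a)] (hn : F^[n] 0 a = 0) (ht0 : ∀ b, 0 ≤ t b) (htm : ∀ b, t b ≤ m)
    (hm0 : 0 ≤ m) (hm1 : m < 1) : F^[n] t a ≤ m := by
  rw [hF]
  set g := fun ω => ∏ b, t b ^ Z n ω b
  by_cases hg : Integrable g (μ a)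
  swap
  · rw [integral_undef hg]
    exact hm0
  have hextinct ω (hω : ∑ b, Z n ω b = 0) : g ω = 1 :=
    prod_eq_one fun b hb => by rw [sum_eq_zero_iff.1 hω b hb, pow_zero]
  have hsurvive ω (hω : ∑ b, Z n ω b ≠ 0) : g ω ≤ m :=
    (prod_pow_le_pow_sum _ _ (fun b _ => ht0 b) fun b _ => htm b).trans
      (pow_le_of_le_one hm0 hm1.le hω)
  -- `Z` need not be measurable, but since `m < 1` extinction is read off the integrable `g`.
  have hindicator : (fun ω => (0 : ℝ) ^ ∑ b, Z n ω b) = Set.indicator (Set.Ici 1) 1 ∘ g := by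
    ext ω
    by_cases hω : ∑ b, Z n ω b = 0
    · simp [hω, hextinct ω hω]
    · have : ¬ 1 ≤ g ω := fun h => by linarith [hsurvive ω hω]
      simp [hω, this]
  have hint : Integrable (fun ω => (0 : ℝ) ^ ∑ b, Z n ω b) (μ a) := by
    refine .of_bound ?_ 1 (.of_forall fun ω => ?_)
    · rw [hindicator]
      exact ((measurable_const.indicator measurableSet_Ici).comp_aemeasurable
        hg.aemeasurable).aestronglyMeasurable
    · rcases eq_or_ne (∑ b, Z n ω b) 0 with hω | hω <;> simp [hω]
  rw [hF] at hn
  simp only [Pi.zero_apply, prod_pow_eq_pow_sum] at hn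
  have hsurv : ∀ᵐ ω ∂μ a, ∑ b, Z n ω b ≠ 0 := by
    filter_upwards [(integral_eq_zero_iff_of_nonneg (fun ω => pow_nonneg le_rfl _) hint).1 hn]
      with ω hω
    exact fun h => by simp [h] at hω
  calc ∫ ω, g ω ∂μ a ≤ ∫ _, m ∂μ a := integral_mono_of_nonneg
        (.of_forall fun ω => prod_nonneg fun b _ => pow_nonneg (ht0 b) _) (integrable_const m)
        (hsurv.mono hsurvive)
    _ = m := by simp

end IsGeneratingFunction

theorem mgw_generating_function_contraction_general
    {Ω : Type*} [MeasurableSpace Ω]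
    {Q : Type*} [Fintype Q] [Nonempty Q]
    (μ : Q → Measure Ω) (hμ : ∀ a, IsProbabilityMeasure (μ a))
    (Z : ℕ → Ω → Q → ℕ)
    (F : (Q → ℝ) → (Q → ℝ))
    (hgen : ∀ (a : Q) (n : ℕ) (s : Q → ℝ),
      F^[n] s a = ∫ ω, ∏ b, s b ^ (Z n ω b) ∂(μ a))
    (n₀ : ℕ)
    (hbig : ∀ a, 0 < μ a {ω | 1 < ∑ b, Z n₀ ω b})
    (hnoext : ∀ a, μ a {ω | ∑ b, Z n₀ ω b = 0} = 0)
    (s₀ : ℝ) (hs₀1 : s₀ < 1) :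
    ∃ C γ : ℝ, 0 ≤ C ∧ 0 ≤ γ ∧ γ < 1 ∧
      ∀ (n : ℕ) (s : Q → ℝ), (∀ b, 0 ≤ s b) → (∀ b, s b ≤ s₀) →
        ∀ a, F^[n] s a ≤ C * γ ^ n * (Finset.univ.sup' Finset.univ_nonempty s) := by
  have hF : IsGeneratingFunction μ Z F := hgen
  obtain ⟨a₀, ha₀⟩ := Finite.exists_min fun a => (μ a).real {ω | 1 < ∑ b, Z n₀ ω b}
  set p := (μ a₀).real {ω | 1 < ∑ b, Z n₀ ω b}
  have hp0 : 0 < p := ENNReal.toReal_pos (hbig a₀).ne' (measure_ne_top _ _)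
  have hn₀ : 0 < n₀ := hF.pos_of_branching (hnoext a₀) (hbig a₀)
  set β := max (1 - (1 - s₀) * p) (1 / 2)
  have hβ0 : 0 < β := lt_max_of_lt_right one_half_pos
  have hβ1 : β < 1 := max_lt (by nlinarith) one_half_lt_one
  refine ⟨β⁻¹, β ^ (n₀ : ℝ)⁻¹, by positivity, by positivity,
    Real.rpow_lt_one hβ0.le hβ1 (by positivity), fun n s hs0 hs₀ a => ?_⟩
  set M := univ.sup' univ_nonempty s
  have hsM b : s b ≤ M := le_sup' s (mem_univ b)
  have hM0 : 0 ≤ M := (hs0 a).trans (hsM a)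
  have hMs₀ : M ≤ s₀ := sup'_le _ _ fun b _ => hs₀ b
  have hblocks := iterate_le_pow_mul hβ0.le hβ1.le
    (fun t m ht0 htm hms₀ b => ⟨hF.iterate_nonneg ht0 n₀ b, hF.iterate_le_mul_of_le (hnoext b)
      (ha₀ b) hp0.le hs₀1.le (le_max_left _ _) ht0 htm hms₀⟩) (n / n₀) hs0 hsM hM0 hMs₀
  rw [← Function.iterate_mul] at hblocks
  have hrem : F^[n % n₀] 0 a = 0 :=
    congrFun (hF.iterate_zero_eq_zero_of_le hnoext hbig (Nat.mod_lt n hn₀).le) a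
  calc F^[n] s a = F^[n % n₀] (F^[n₀ * (n / n₀)] s) a := by
        rw [← Function.iterate_add_apply, Nat.mod_add_div]
    _ ≤ β ^ (n / n₀) * M := hF.iterate_le_of_iterate_zero_eq_zero hrem (fun b => (hblocks b).1)
        (fun b => (hblocks b).2) (by positivity)
        ((mul_le_of_le_one_left hM0 (pow_le_one₀ hβ0.le hβ1.le)).trans_lt (by linarith))
    _ ≤ β⁻¹ * (β ^ (n₀ : ℝ)⁻¹) ^ n * M :=
        mul_le_mul_of_nonneg_right (pow_div_le_inv_mul_rpow_pow hβ0 hβ1.le hn₀ n) hM0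

/-- Uniform geometric contraction of the iterated generating function of a multi-type
Galton–Watson process: if for some `n₀` every type has positive probability of more than
one descendant at generation `n₀` and zero probability of extinction by generation `n₀`,
then for every `s₀ < 1` there are `C < ∞` and `γ < 1` with
`‖F^{(n)}(s⃗)‖_∞ ≤ C γ^n ‖s⃗‖_∞` for all `s⃗ ∈ [0,s₀]^Q` and all `n`. -/
theorem mgw_generating_function_contraction
    {Ω : Type*} [MeasurableSpace Ω]
    {Q : Type*} [Fintype Q] [Nonempty Q]
    (μ : Q → Measure Ω) (hμ : ∀ a, IsProbabilityMeasure (μ a))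
    (Z : ℕ → Ω → Q → ℕ)
    (F : (Q → ℝ) → (Q → ℝ))
    (hgen : ∀ (a : Q) (n : ℕ) (s : Q → ℝ),
      F^[n] s a = ∫ ω, ∏ b, s b ^ (Z n ω b) ∂(μ a))
    (n₀ : ℕ)
    (hbig : ∀ a, 0 < μ a {ω | 1 < ∑ b, Z n₀ ω b})
    (hnoext : ∀ a, μ a {ω | ∑ b, Z n₀ ω b = 0} = 0)
    (s₀ : ℝ) (hs₀0 : 0 ≤ s₀) (hs₀1 : s₀ < 1) :
    ∃ C γ : ℝ, 0 ≤ C ∧ 0 ≤ γ ∧ γ < 1 ∧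
      ∀ (n : ℕ) (s : Q → ℝ), (∀ b, 0 ≤ s b) → (∀ b, s b ≤ s₀) →
        ∀ a, F^[n] s a ≤ C * γ ^ n * (Finset.univ.sup' Finset.univ_nonempty s) :=
  mgw_generating_function_contraction_general μ hμ Z F hgen n₀ hbig hnoext s₀ hs₀1
end
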